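/- arXiv:1710.00876 — 4 statements merged into one kernel-verified Lean document; each statement's English description precedes it below -/
import Mathlib

section
/- Let n ≥ 1 and consider the 2n points 1, 2, …, 2n on the real line (so consecutive points are unit separated), partitioned into n pairs by a fixed-point-free involution π of {1,…,2n} (point i is paired with point π(i)). Then there exists a coloring c : {1,…,2n} → {red, blue} with c(π(i)) ≠ c(i) for every i, such that whenever i < j have the same color and no index strictly between i and j has that color, one has j − i ≤ 3. -/
/-- The "block" involution pairing `2k ↔ 2k+1`. -/
def blockFun (n : ℕ) (i : Fin (2 * n)) : Fin (2 * n) :=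
  ⟨if i.val % 2 = 0 then i.val + 1 else i.val - 1, by
    rcases i with ⟨v, hv⟩; dsimp; split_ifs with h <;> omega⟩

lemma blockFun_invol (n : ℕ) : Function.Involutive (blockFun n) := by
  intro i
  rcases i with ⟨v, hv⟩
  apply Fin.ext
  simp only [blockFun]
  split_ifs <;> omega

lemma blockFun_ne (n : ℕ) (i : Fin (2 * n)) : blockFun n i ≠ i := by
  rcases i with ⟨v, hv⟩
  simp only [blockFun, Fin.ext_iff, ne_eq]
  split_ifs <;> omega

/-- Core construction: a proper 2-coloring of the union of the matching `π`
and the block matching. -/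
lemma exists_coloring (n : ℕ) (π : Equiv.Perm (Fin (2 * n)))
    (hinv : ∀ i, π (π i) = i) (hfpf : ∀ i, π i ≠ i) :
    ∃ c : Fin (2 * n) → Bool,
      (∀ i, c (π i) ≠ c i) ∧ (∀ i, c (blockFun n i) ≠ c i) := by
  classical
  set β : Equiv.Perm (Fin (2 * n)) := (blockFun_invol n).toPerm with hβdef
  have hβcoe : ∀ x, β x = blockFun n x := fun x => rfl
  set τ : Equiv.Perm (Fin (2 * n)) := β * π with hτ
  have hππ : π * π = 1 := by
    apply Equiv.ext; intro i; simp [Equiv.Perm.mul_apply, hinv i]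
  have hπinv : π⁻¹ = π := inv_eq_of_mul_eq_one_left hππ
  have hββ : β * β = 1 := by
    apply Equiv.ext; intro i
    simp only [Equiv.Perm.mul_apply, Equiv.Perm.one_apply, hβcoe]
    exact (blockFun_invol n) i
  have hβinv : β⁻¹ = β := inv_eq_of_mul_eq_one_left hββ
  have hτinv : τ⁻¹ = π * β := by rw [hτ, mul_inv_rev, hπinv, hβinv]
  have hconj : π * τ * π⁻¹ = τ⁻¹ := by
    rw [hπinv, hτinv, hτ]
    rw [show π * (β * π) * π = π * β * (π * π) from by group, hππ, mul_one]
  have hz : ∀ k : ℤ, π * τ ^ k = τ ^ (-k) * π := by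
    intro k
    have h1 : (MulAut.conj π) (τ ^ k) = ((MulAut.conj π) τ) ^ k := map_zpow _ _ _
    have h2 : (MulAut.conj π) τ = τ⁻¹ := by simpa [MulAut.conj_apply] using hconj
    rw [h2, inv_zpow, ← zpow_neg] at h1
    have h3 : π * τ ^ k * π⁻¹ = τ ^ (-k) := by simpa [MulAut.conj_apply] using h1
    exact mul_inv_eq_iff_eq_mul.mp h3
  have hzp : ∀ (k : ℤ) (x : Fin (2 * n)), π ((τ ^ k) x) = (τ ^ (-k)) (π x) := by
    intro k x
    rw [← Equiv.Perm.mul_apply, ← Equiv.Perm.mul_apply, hz]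
  have hβτ : β = τ * π := by rw [hτ, mul_assoc, hππ, mul_one]
  -- Core lemma: i and π i are never in the same τ-cycle.
  have hcore : ∀ i, ¬ τ.SameCycle i (π i) := by
    rintro i ⟨m, hm⟩
    rcases Int.even_or_odd m with ⟨k, hk⟩ | ⟨k, hk⟩
    · apply hfpf ((τ ^ k) i)
      calc π ((τ ^ k) i) = (τ ^ (-k)) (π i) := hzp k i
        _ = (τ ^ (-k)) ((τ ^ m) i) := by rw [hm]
        _ = (τ ^ (-k + m)) i := by rw [← Equiv.Perm.mul_apply, ← zpow_add]
        _ = (τ ^ k) i := by rw [show -k + m = k by omega]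
    · apply blockFun_ne n ((τ ^ (k + 1)) i)
      have hgrp : β * τ ^ (k + 1) = τ ^ (-k) * π := by
        rw [hβτ, mul_assoc, hz (k + 1), ← mul_assoc]
        rw [show τ * τ ^ (-(k + 1)) = τ ^ (1 : ℤ) * τ ^ (-(k + 1)) from by rw [zpow_one],
          ← zpow_add, show (1 : ℤ) + -(k + 1) = -k from by ring]
      have : β ((τ ^ (k + 1)) i) = (τ ^ (k + 1)) i := by
        calc β ((τ ^ (k + 1)) i) = (β * τ ^ (k + 1)) i := rfl
          _ = (τ ^ (-k) * π) i := by rw [hgrp]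
          _ = (τ ^ (-k)) (π i) := rfl
          _ = (τ ^ (-k)) ((τ ^ m) i) := by rw [hm]
          _ = (τ ^ (-k) * τ ^ m) i := rfl
          _ = (τ ^ (-k + m)) i := by rw [← zpow_add]
          _ = (τ ^ (k + 1)) i := by rw [show -k + m = k + 1 by omega]
      simpa [hβcoe] using this
  -- map of SameCycle under π
  have hπSC : ∀ x y, τ.SameCycle x y → τ.SameCycle (π x) (π y) := by
    rintro x y ⟨k, hk⟩
    exact ⟨-k, by rw [← hzp, hk]⟩
  -- equivalence relation
  set R : Fin (2 * n) → Fin (2 * n) → Prop :=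
    fun x y => τ.SameCycle x y ∨ τ.SameCycle x (π y) with hR
  have hrefl : ∀ x, R x x := fun x => Or.inl (Equiv.Perm.SameCycle.refl τ x)
  have hsymm : ∀ {x y}, R x y → R y x := by
    rintro x y (h | h)
    · exact Or.inl h.symm
    · have := hπSC _ _ h
      rw [hinv] at this
      exact Or.inr this.symm
  have htrans : ∀ {x y z}, R x y → R y z → R x z := by
    rintro x y z (h1 | h1) (h2 | h2)
    · exact Or.inl (h1.trans h2)
    · exact Or.inr (h1.trans h2)
    · exact Or.inr (h1.trans (hπSC _ _ h2))
    · have := hπSC _ _ h2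
      rw [hinv] at this
      exact Or.inl (h1.trans this)
  set s : Setoid (Fin (2 * n)) := ⟨R, ⟨hrefl, hsymm, htrans⟩⟩ with hs
  set c : Fin (2 * n) → Bool :=
    fun i => decide (τ.SameCycle (Quotient.mk s i).out i) with hc
  have hout : ∀ x, R (Quotient.mk s x).out x := by
    intro x
    have h := Quotient.exact (Quotient.out_eq (Quotient.mk s x))
    exact h
  have hmkπ : ∀ x, Quotient.mk s (π x) = Quotient.mk s x := by
    intro x
    apply Quotient.sound
    show R (π x) x
    exact Or.inr (Equiv.Perm.SameCycle.refl τ (π x))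
  have hmkτ : ∀ x, Quotient.mk s (τ x) = Quotient.mk s x := by
    intro x
    apply Quotient.sound
    show R (τ x) x
    exact Or.inl (Equiv.Perm.SameCycle.symm ⟨1, by simp⟩)
  have hcπ : ∀ i, c (π i) ≠ c i := by
    intro i
    have hnot : ¬(τ.SameCycle (Quotient.mk s i).out i ∧
        τ.SameCycle (Quotient.mk s i).out (π i)) := by
      rintro ⟨h1, h2⟩
      exact hcore i (h1.symm.trans h2)
    have ho := hout i
    simp only [hc, hmkπ i]
    rcases ho with h | h
    · have h2 : ¬ τ.SameCycle (Quotient.mk s i).out (π i) := fun hh => hnot ⟨h, hh⟩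
      simp [h, h2]
    · have h2 : ¬ τ.SameCycle (Quotient.mk s i).out i := fun hh => hnot ⟨hh, h⟩
      simp [h, h2]
  have hcτ : ∀ x, c (τ x) = c x := by
    intro x
    simp only [hc, hmkτ x]
    apply decide_eq_decide.mpr
    constructor
    · intro h
      exact h.trans (Equiv.Perm.SameCycle.symm ⟨1, by simp⟩)
    · intro h
      exact h.trans ⟨1, by simp⟩
  refine ⟨c, hcπ, ?_⟩
  intro i
  have hbi : blockFun n i = τ (π i) := by
    have : β i = τ (π i) := by rw [hβτ]; simp [Equiv.Perm.mul_apply, hinv]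
    rw [← this]; rfl
  rw [hbi, hcτ]
  exact hcπ i

/-- For `n ≥ 1`, the `2n` unit-spaced points `1, …, 2n` on the line
(indexed here by `Fin (2*n)`, point `i` at position `i+1`), paired by a
fixed-point-free involution `π`, admit a feasible red/blue coloring (the two
points of each pair get different colors) such that any two consecutive
same-colored points are at distance at most `3`. -/
theorem bottleneck_coloring_on_line (n : ℕ) (hn : 1 ≤ n)
    (π : Equiv.Perm (Fin (2 * n)))
    (hinv : ∀ i, π (π i) = i) (hfpf : ∀ i, π i ≠ i) :
    ∃ c : Fin (2 * n) → Bool,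
      (∀ i, c (π i) ≠ c i) ∧
      ∀ i j : Fin (2 * n), i < j → c i = c j →
        (∀ k : Fin (2 * n), i < k → k < j → c k ≠ c i) →
        (j : ℕ) - (i : ℕ) ≤ 3 := by
  obtain ⟨c, h1, h2⟩ := exists_coloring n π hinv hfpf
  refine ⟨c, h1, ?_⟩
  intro i j hij hcij hbet
  by_contra hgt
  push_neg at hgt
  have hij' : (i : ℕ) < (j : ℕ) := hij
  have h4 : (i : ℕ) + 4 ≤ (j : ℕ) := by omega
  have hjlt := j.isLt
  set k1 : Fin (2 * n) := ⟨(i : ℕ) + 1, by omega⟩ with hk1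
  set k2 : Fin (2 * n) := ⟨(i : ℕ) + 2, by omega⟩ with hk2
  set k3 : Fin (2 * n) := ⟨(i : ℕ) + 3, by omega⟩ with hk3
  have hb1 : c k1 ≠ c i := hbet k1 (by simp [Fin.lt_def, hk1]) (by simp [Fin.lt_def, hk1]; omega)
  have hb2 : c k2 ≠ c i := hbet k2 (by simp [Fin.lt_def, hk2]) (by simp [Fin.lt_def, hk2]; omega)
  have hb3 : c k3 ≠ c i := hbet k3 (by simp [Fin.lt_def, hk3]) (by simp [Fin.lt_def, hk3]; omega)
  have heq12 : c k1 = c k2 := by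
    revert hb1 hb2; cases c k1 <;> cases c k2 <;> cases c i <;> simp
  have heq23 : c k2 = c k3 := by
    revert hb2 hb3; cases c k2 <;> cases c k3 <;> cases c i <;> simp
  rcases Nat.even_or_odd ((i : ℕ) + 1) with he | ho
  · have hblk : blockFun n k1 = k2 := by
      apply Fin.ext
      simp only [blockFun, hk1, hk2]
      have : ((i : ℕ) + 1) % 2 = 0 := Nat.even_iff.mp he
      rw [if_pos this]
    have := h2 k1
    rw [hblk] at this
    exact this heq12.symm
  · have hblk : blockFun n k2 = k3 := by
      apply Fin.ext
      simp only [blockFun, hk2, hk3]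
      have : ((i : ℕ) + 2) % 2 = 0 := by
        have := Nat.odd_iff.mp ho; omega
      rw [if_pos this]
    have := h2 k2
    rw [hblk] at this
    exact this heq23.symm
end

section
/- Let n ≥ 1 and let s_1 ≤ s_2 ≤ … ≤ s_{2n} be 2n points on the real line, partitioned into n pairs by a fixed-point-free involution π of the index set. Assume that some pair has both of its points among the leftmost n points s_1, …, s_n. Then for every feasible coloring {1,…,2n} = R ∪ B and every j with 1 ≤ j ≤ 2n − 1, one has max(gap(R), gap(B)) ≥ s_{j+1} − s_j, where gap(X) denotes the maximum difference between consecutive elements of {s_i : i ∈ X} in sorted order (and gap(X) = 0 if |X| ≤ 1). -/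
/-- The maximum gap between consecutive elements of a finite set of reals
(`0` if the set has at most one element). -/
noncomputable def gap (Y : Finset ℝ) : ℝ :=
  sSup ({0} ∪ {c | ∃ a ∈ Y, ∃ b ∈ Y, a < b ∧ (∀ y ∈ Y, ¬ (a < y ∧ y < b)) ∧ c = b - a})

lemma gap_set_bddAbove (Y : Finset ℝ) :
    BddAbove ({0} ∪ {c | ∃ a ∈ Y, ∃ b ∈ Y, a < b ∧ (∀ y ∈ Y, ¬ (a < y ∧ y < b)) ∧ c = b - a}) := by
  have hsub : ({0} ∪ {c | ∃ a ∈ Y, ∃ b ∈ Y, a < b ∧ (∀ y ∈ Y, ¬ (a < y ∧ y < b)) ∧ c = b - a})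
      ⊆ ↑(insert (0:ℝ) ((Y ×ˢ Y).image fun p => p.2 - p.1)) := by
    intro c hc
    rcases hc with h0 | ⟨a, ha, b, hb, _, _, rfl⟩
    · simp only [Set.mem_singleton_iff] at h0
      simp [h0]
    · simp only [Finset.coe_insert, Set.mem_insert_iff, Finset.mem_coe, Finset.mem_image]
      exact Or.inr ⟨(a, b), Finset.mem_product.mpr ⟨ha, hb⟩, rfl⟩
  exact (Finset.bddAbove _).mono hsub

lemma le_gap (Y : Finset ℝ) (c : ℝ)
    (hc : c ∈ ({0} ∪ {c | ∃ a ∈ Y, ∃ b ∈ Y, a < b ∧ (∀ y ∈ Y, ¬ (a < y ∧ y < b)) ∧ c = b - a} : Set ℝ)) :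
    c ≤ gap Y :=
  le_csSup (gap_set_bddAbove Y) hc

lemma gap_nonneg (Y : Finset ℝ) : 0 ≤ gap Y :=
  le_gap Y 0 (Or.inl rfl)

lemma straddle_gap (n : ℕ) (s : Fin (2*n) → ℝ) (hmono : Monotone s)
    (j : Fin (2*n)) (hj : (j:ℕ)+1 < 2*n)
    (X : Finset (Fin (2*n))) (i₁ : Fin (2*n)) (hi₁ : i₁ ∈ X) (h1 : (i₁:ℕ) ≤ (j:ℕ))
    (i₂ : Fin (2*n)) (hi₂ : i₂ ∈ X) (h2 : (j:ℕ) < (i₂:ℕ))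
    (hd : s j < s ⟨(j:ℕ)+1, hj⟩) :
    s ⟨(j:ℕ)+1, hj⟩ - s j ≤ gap (X.image s) := by
  set Y := X.image s with hY
  have hA : s i₁ ∈ Y.filter (fun y => y ≤ s j) := by
    refine Finset.mem_filter.mpr ⟨Finset.mem_image_of_mem s hi₁, hmono ?_⟩
    exact Fin.le_def.mpr h1
  have hB : s i₂ ∈ Y.filter (fun y => s ⟨(j:ℕ)+1, hj⟩ ≤ y) := by
    refine Finset.mem_filter.mpr ⟨Finset.mem_image_of_mem s hi₂, hmono ?_⟩
    exact Fin.le_def.mpr h2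
  have hAne : (Y.filter (fun y => y ≤ s j)).Nonempty := ⟨_, hA⟩
  have hBne : (Y.filter (fun y => s ⟨(j:ℕ)+1, hj⟩ ≤ y)).Nonempty := ⟨_, hB⟩
  set a := (Y.filter (fun y => y ≤ s j)).max' hAne with ha
  set b := (Y.filter (fun y => s ⟨(j:ℕ)+1, hj⟩ ≤ y)).min' hBne with hb
  have haY : a ∈ Y := (Finset.mem_filter.mp ((Y.filter _).max'_mem hAne)).1
  have hbY : b ∈ Y := (Finset.mem_filter.mp ((Y.filter _).min'_mem hBne)).1
  have hale : a ≤ s j := (Finset.mem_filter.mp ((Y.filter _).max'_mem hAne)).2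
  have hble : s ⟨(j:ℕ)+1, hj⟩ ≤ b := (Finset.mem_filter.mp ((Y.filter _).min'_mem hBne)).2
  have hab : a < b := lt_of_le_of_lt hale (lt_of_lt_of_le hd hble)
  have hgapmem : b - a ≤ gap Y := by
    apply le_gap
    refine Or.inr ⟨a, haY, b, hbY, hab, ?_, rfl⟩
    intro y hy ⟨hay, hyb⟩
    obtain ⟨i, hiX, rfl⟩ := Finset.mem_image.mp hy
    rcases le_or_gt (i:ℕ) (j:ℕ) with hle | hgt
    · have : s i ∈ Y.filter (fun y => y ≤ s j) :=
        Finset.mem_filter.mpr ⟨hy, hmono (Fin.le_def.mpr hle)⟩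
      exact absurd (Finset.le_max' _ _ this) (not_le.mpr hay)
    · have : s i ∈ Y.filter (fun y => s ⟨(j:ℕ)+1, hj⟩ ≤ y) :=
        Finset.mem_filter.mpr ⟨hy, hmono (Fin.le_def.mpr hgt)⟩
      exact absurd (Finset.min'_le _ _ this) (not_le.mpr hyb)
  have : s ⟨(j:ℕ)+1, hj⟩ - s j ≤ b - a := by linarith
  linarith

lemma split_contra (n : ℕ) (π : Equiv.Perm (Fin (2*n)))
    (hinv : ∀ i, π (π i) = i)
    (hpair : ∃ i : Fin (2*n), (i:ℕ) < n ∧ ((π i : Fin (2*n)):ℕ) < n)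
    (j : Fin (2*n))
    (C D : Finset (Fin (2*n))) (hCD : C ∪ D = Finset.univ) (hd : Disjoint C D)
    (hfe : ∀ i, i ∈ C ↔ π i ∈ D)
    (hC : ∀ i ∈ C, (i:ℕ) ≤ (j:ℕ)) (hD : ∀ i ∈ D, (j:ℕ) < (i:ℕ)) : False := by
  have hCtoD : ∀ i ∈ C, π i ∈ D := fun i hi => (hfe i).mp hi
  have hDtoC : ∀ i ∈ D, π i ∈ C := by
    intro i hi
    have := hfe (π i)
    rw [hinv i] at this
    exact this.mpr hi
  have hc1 : C.card ≤ D.card :=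
    Finset.card_le_card_of_injOn π hCtoD (π.injective.injOn)
  have hc2 : D.card ≤ C.card :=
    Finset.card_le_card_of_injOn π hDtoC (π.injective.injOn)
  have hsum : C.card + D.card = 2 * n := by
    rw [← Finset.card_union_of_disjoint hd, hCD, Finset.card_univ, Fintype.card_fin]
  have hCcard : C.card = n := by omega
  have hsub : C ⊆ Finset.Iic j := fun i hi => Finset.mem_Iic.mpr (Fin.le_def.mpr (hC i hi))
  have hIic : (Finset.Iic j).card = (j:ℕ) + 1 := Fin.card_Iic (b := j)
  have hnle : n ≤ (j:ℕ) + 1 := by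
    have := Finset.card_le_card hsub
    omega
  obtain ⟨i0, hi0, hpi0⟩ := hpair
  have hi0j : (i0:ℕ) ≤ (j:ℕ) := by omega
  have hpi0j : ((π i0 : Fin (2*n)):ℕ) ≤ (j:ℕ) := by omega
  have hi0C : i0 ∈ C := by
    have : i0 ∈ C ∪ D := by rw [hCD]; exact Finset.mem_univ _
    rcases Finset.mem_union.mp this with h | h
    · exact h
    · exact absurd (hD i0 h) (by omega)
  have hpi0D : π i0 ∈ D := (hfe i0).mp hi0C
  exact absurd (hD _ hpi0D) (by omega)

/-- Given `2n` points `s 0 ≤ s 1 ≤ … ≤ s (2n-1)` on the line paired by a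
fixed-point-free involution `π`, if some pair has both of its points among the leftmost
`n` points, then for every feasible coloring `R ∪ B` and every consecutive pair of
indices `j, j+1`, the larger of the two bottleneck values (maximum gaps) is at least
`s (j+1) - s j`. -/
theorem bottleneck_lower_bound_on_line (n : ℕ) (hn : 1 ≤ n)
    (s : Fin (2 * n) → ℝ) (hmono : Monotone s)
    (π : Equiv.Perm (Fin (2 * n)))
    (hinv : ∀ i, π (π i) = i) (hfpf : ∀ i, π i ≠ i)
    (hpair : ∃ i : Fin (2 * n), (i : ℕ) < n ∧ ((π i : Fin (2 * n)) : ℕ) < n)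
    (R B : Finset (Fin (2 * n)))
    (hRB : R ∪ B = Finset.univ) (hdisj : Disjoint R B)
    (hfeas : ∀ i, i ∈ R ↔ π i ∈ B)
    (j : Fin (2 * n)) (hj : (j : ℕ) + 1 < 2 * n) :
    s ⟨(j : ℕ) + 1, hj⟩ - s j ≤ max (gap (R.image s)) (gap (B.image s)) := by
  rcases le_or_gt (s ⟨(j:ℕ)+1, hj⟩) (s j) with hle | hd
  · calc s ⟨(j:ℕ)+1, hj⟩ - s j ≤ 0 := by linarith
    _ ≤ gap (R.image s) := gap_nonneg _
    _ ≤ _ := le_max_left _ _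
  · by_cases hR : (∃ i ∈ R, (i:ℕ) ≤ (j:ℕ)) ∧ (∃ i ∈ R, (j:ℕ) < (i:ℕ))
    · obtain ⟨⟨i₁, hi₁, h1⟩, ⟨i₂, hi₂, h2⟩⟩ := hR
      exact le_trans (straddle_gap n s hmono j hj R i₁ hi₁ h1 i₂ hi₂ h2 hd) (le_max_left _ _)
    by_cases hB : (∃ i ∈ B, (i:ℕ) ≤ (j:ℕ)) ∧ (∃ i ∈ B, (j:ℕ) < (i:ℕ))
    · obtain ⟨⟨i₁, hi₁, h1⟩, ⟨i₂, hi₂, h2⟩⟩ := hB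
      exact le_trans (straddle_gap n s hmono j hj B i₁ hi₁ h1 i₂ hi₂ h2 hd) (le_max_right _ _)
    exfalso
    have hjmem : j ∈ R ∪ B := by rw [hRB]; exact Finset.mem_univ _
    have hj1mem : (⟨(j:ℕ)+1, hj⟩ : Fin (2*n)) ∈ R ∪ B := by rw [hRB]; exact Finset.mem_univ _
    rcases not_and_or.mp hR with hRlow | hRhigh
    · -- R has no low element: all of R is high
      push_neg at hRlow
      have hjB : j ∈ B := by
        rcases Finset.mem_union.mp hjmem with h | h
        · exact absurd le_rfl (not_le.mpr (hRlow j h))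
        · exact h
      have hBhigh : ∀ i ∈ B, (i:ℕ) ≤ (j:ℕ) := by
        rcases not_and_or.mp hB with h | h
        · exact absurd ⟨j, hjB, le_rfl⟩ h
        · push_neg at h
          exact h
      have hfe' : ∀ i, i ∈ B ↔ π i ∈ R := by
        intro i
        constructor
        · intro hi
          have hiR : i ∉ R := (Finset.disjoint_right.mp hdisj) hi
          have : π i ∉ B := fun h => hiR ((hfeas i).mpr h)
          rcases Finset.mem_union.mp (by rw [hRB]; exact Finset.mem_univ (π i) :
            π i ∈ R ∪ B) with h | h
          · exact h
          · exact absurd h this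
        · intro hi
          have := (hfeas (π i)).mp hi
          rwa [hinv i] at this
      exact split_contra n π hinv hpair j B R (by rw [Finset.union_comm]; exact hRB)
        hdisj.symm hfe' hBhigh (fun i hi => hRlow i hi)
    · -- R has no high element: all of R is low
      push_neg at hRhigh
      have hj1B : (⟨(j:ℕ)+1, hj⟩ : Fin (2*n)) ∈ B := by
        rcases Finset.mem_union.mp hj1mem with h | h
        · have := hRhigh _ h
          simp at this
        · exact h
      have hBlow : ∀ i ∈ B, (j:ℕ) < (i:ℕ) := by
        rcases not_and_or.mp hB with h | h
        · push_neg at h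
          exact fun i hi => h i hi
        · exact absurd ⟨⟨(j:ℕ)+1, hj⟩, hj1B, by simp⟩ h
      exact split_contra n π hinv hpair j R B hRB hdisj hfeas hRhigh hBlow
end

section
/- Let n ≥ 1 and let s_1 ≤ s_2 ≤ … ≤ s_{2n} be 2n points on the real line, partitioned into n pairs by a fixed-point-free involution π of the index set. Then there exists a feasible coloring {1,…,2n} = R ∪ B such that max(gap(R), gap(B)) ≤ 3 · max_{1 ≤ j ≤ 2n−1} (s_{j+1} − s_j), where gap(X) denotes the maximum difference between consecutive elements of {s_i : i ∈ X} in sorted order (and gap(X) = 0 if |X| ≤ 1). -/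
def budf (k : ℕ) : ℕ := if k % 2 = 0 then k + 1 else k - 1

lemma budf_lt {n k : ℕ} (h : k < 2*n) : budf k < 2*n := by unfold budf; split <;> omega
lemma budf_budf (k : ℕ) : budf (budf k) = k := by unfold budf; split <;> split <;> omega
lemma budf_ne (k : ℕ) : budf k ≠ k := by
  unfold budf
  by_cases h : k % 2 = 0
  · rw [if_pos h]; omega
  · rw [if_neg h]; omega
lemma budf_even {k : ℕ} (h : k % 2 = 0) : budf k = k + 1 := by unfold budf; rw [if_pos h]

def bud (n : ℕ) (i : Fin (2*n)) : Fin (2*n) := ⟨budf i, budf_lt i.isLt⟩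

lemma bud_invol (n : ℕ) : Function.Involutive (bud n) := by
  intro i; apply Fin.ext; simp [bud, budf_budf]

noncomputable def bperm (n : ℕ) : Equiv.Perm (Fin (2*n)) :=
  Function.Involutive.toPerm _ (bud_invol n)

lemma bperm_apply (n : ℕ) (i : Fin (2*n)) : bperm n i = bud n i := rfl

lemma bperm_mul_self (n : ℕ) : bperm n * bperm n = 1 := by
  ext i
  simp [bperm_apply, Equiv.Perm.mul_apply, bud_invol n i]

lemma bperm_bperm (n : ℕ) (x : Fin (2*n)) : bperm n (bperm n x) = x := bud_invol n x

lemma bperm_ne (n : ℕ) (x : Fin (2*n)) : bperm n x ≠ x := by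
  intro h
  exact budf_ne (x : ℕ) (congrArg Fin.val h)

noncomputable def sigmaP (n : ℕ) (π : Equiv.Perm (Fin (2*n))) : Equiv.Perm (Fin (2*n)) :=
  π * bperm n

open Classical in
noncomputable def mrep (n : ℕ) (π : Equiv.Perm (Fin (2*n))) (i : Fin (2*n)) : Fin (2*n) :=
  Finset.min'
    (Finset.univ.filter
      (fun j => (sigmaP n π).SameCycle i j ∨ (sigmaP n π).SameCycle (bperm n i) j))
    ⟨i, by simp [Finset.mem_filter]; exact Or.inl (Equiv.Perm.SameCycle.refl _ _)⟩

noncomputable def col (n : ℕ) (π : Equiv.Perm (Fin (2*n))) (i : Fin (2*n)) : Prop :=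
  (sigmaP n π).SameCycle (mrep n π i) i

section ColProps

variable {n : ℕ} {π : Equiv.Perm (Fin (2*n))}

lemma bperm_mul_sigma (hinv : ∀ i, π (π i) = i) :
    ∀ k : ℤ, bperm n * (sigmaP n π) ^ k = (sigmaP n π) ^ (-k) * bperm n := by
  have hB2 : bperm n * bperm n = 1 := bperm_mul_self n
  have hBinv : (bperm n)⁻¹ = bperm n := inv_eq_of_mul_eq_one_right hB2
  have hπ2 : π * π = 1 := by ext i; simp [Equiv.Perm.mul_apply, hinv]
  have hπinv : π⁻¹ = π := inv_eq_of_mul_eq_one_right hπ2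
  have h1 : bperm n * sigmaP n π * (bperm n)⁻¹ = (sigmaP n π)⁻¹ := by
    rw [hBinv, sigmaP, mul_inv_rev, hπinv, hBinv, mul_assoc, mul_assoc, hB2, mul_one]
  intro k
  have h2 : (MulAut.conj (bperm n)) ((sigmaP n π) ^ k) = ((sigmaP n π)⁻¹) ^ k := by
    rw [map_zpow, MulAut.conj_apply, h1]
  have h3 : bperm n * (sigmaP n π) ^ k * (bperm n)⁻¹ = (sigmaP n π) ^ (-k) := by
    rw [MulAut.conj_apply] at h2
    rw [h2, inv_zpow, zpow_neg]
  calc bperm n * (sigmaP n π) ^ k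
      = bperm n * (sigmaP n π) ^ k * (bperm n)⁻¹ * bperm n := by
        rw [hBinv, mul_assoc, hB2, mul_one]
    _ = (sigmaP n π) ^ (-k) * bperm n := by rw [h3]

lemma bperm_sigma_apply (hinv : ∀ i, π (π i) = i) (k : ℤ) (x : Fin (2*n)) :
    bperm n (((sigmaP n π) ^ k) x) = ((sigmaP n π) ^ (-k)) (bperm n x) := by
  have := congrFun (congrArg (fun (e : Equiv.Perm (Fin (2*n))) => (e : Fin (2*n) → Fin (2*n)))
    (bperm_mul_sigma hinv k)) x
  simpa [Equiv.Perm.mul_apply] using this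

lemma pi_eq_sigma_bperm (x : Fin (2*n)) : π x = (sigmaP n π) (bperm n x) := by
  simp [sigmaP, Equiv.Perm.mul_apply, bperm_bperm]

lemma not_sameCycle_bperm (hinv : ∀ i, π (π i) = i) (hfpf : ∀ i, π i ≠ i)
    (i : Fin (2*n)) : ¬ (sigmaP n π).SameCycle i (bperm n i) := by
  rintro ⟨r, hr⟩
  set σ := sigmaP n π with hσ
  have hzz : ∀ (a b : ℤ) (x : Fin (2*n)), (σ ^ a) ((σ ^ b) x) = (σ ^ (a + b)) x := by
    intro a b x; rw [← Equiv.Perm.mul_apply, ← zpow_add]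
  rcases Int.even_or_odd r with ⟨j, hj⟩ | ⟨j, hj⟩
  · have h1 : bperm n ((σ ^ j) i) = (σ ^ j) i := by
      rw [bperm_sigma_apply hinv, ← hr, hzz]
      have : -j + r = j := by omega
      rw [this]
    exact bperm_ne n _ h1
  · have h1 : π ((σ ^ (j + 1)) i) = (σ ^ (j + 1)) i := by
      rw [pi_eq_sigma_bperm, bperm_sigma_apply hinv, ← hr, hzz]
      have h2 : ∀ x : Fin (2*n), σ x = (σ ^ (1 : ℤ)) x := by intro x; rw [zpow_one]
      rw [h2, hzz]
      have : (1 : ℤ) + (-(j + 1) + r) = j + 1 := by omega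
      rw [this]
    exact hfpf _ h1

end ColProps

lemma min'_congr {α : Type*} [LinearOrder α] {s t : Finset α} (h : s = t)
    {hs : s.Nonempty} {ht : t.Nonempty} : s.min' hs = t.min' ht := by subst h; rfl

lemma sc_congr_right {α : Type*} {σ : Equiv.Perm α} {x y : α} (h : σ.SameCycle x y) (j : α) :
    σ.SameCycle j x ↔ σ.SameCycle j y :=
  ⟨fun h2 => h2.trans h, fun h2 => h2.trans h.symm⟩

lemma sc_congr_left {α : Type*} {σ : Equiv.Perm α} {x y : α} (h : σ.SameCycle x y) (j : α) :
    σ.SameCycle x j ↔ σ.SameCycle y j :=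
  ⟨fun h2 => h.symm.trans h2, fun h2 => h.trans h2⟩

section ColProps2

variable {n : ℕ} {π : Equiv.Perm (Fin (2*n))}

open Classical

lemma mrep_bperm (i : Fin (2*n)) : mrep n π (bperm n i) = mrep n π i := by
  unfold mrep
  apply min'_congr
  apply Finset.filter_congr
  intro j _
  rw [bperm_bperm]
  exact or_comm

lemma mrep_mem (i : Fin (2*n)) :
    (sigmaP n π).SameCycle i (mrep n π i) ∨ (sigmaP n π).SameCycle (bperm n i) (mrep n π i) := by
  have := Finset.min'_mem
    (Finset.univ.filter
      (fun j => (sigmaP n π).SameCycle i j ∨ (sigmaP n π).SameCycle (bperm n i) j))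
    ⟨i, by simp [Finset.mem_filter]; exact Or.inl (Equiv.Perm.SameCycle.refl _ _)⟩
  rw [Finset.mem_filter] at this
  exact this.2

lemma col_bperm (hinv : ∀ i, π (π i) = i) (hfpf : ∀ i, π i ≠ i) (i : Fin (2*n)) :
    col n π (bperm n i) ↔ ¬ col n π i := by
  have hm := mrep_mem (π := π) i
  have hnot : ¬ ((sigmaP n π).SameCycle (mrep n π i) i ∧
      (sigmaP n π).SameCycle (mrep n π i) (bperm n i)) := by
    rintro ⟨h1, h2⟩
    exact not_sameCycle_bperm hinv hfpf i (h1.symm.trans h2)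
  unfold col
  rw [mrep_bperm]
  constructor
  · intro h1 h2
    exact hnot ⟨h2, h1⟩
  · intro h1
    rcases hm with h | h
    · exact absurd h.symm h1
    · exact h.symm

lemma col_pi (hinv : ∀ i, π (π i) = i) (hfpf : ∀ i, π i ≠ i) (i : Fin (2*n)) :
    col n π (π i) ↔ ¬ col n π i := by
  have hbp : (sigmaP n π).SameCycle (bperm n i) (π i) := by
    refine ⟨1, ?_⟩
    rw [zpow_one]
    exact (pi_eq_sigma_bperm i).symm
  have hmπ : mrep n π (π i) = mrep n π i := by
    unfold mrep
    apply min'_congr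
    apply Finset.filter_congr
    intro j _
    have h1 : bperm n (π i) = ((sigmaP n π) ^ (-1 : ℤ)) i := by
      have e0 : (sigmaP n π) (bperm n i) = ((sigmaP n π) ^ (1 : ℤ)) (bperm n i) := by
        rw [zpow_one]
      rw [pi_eq_sigma_bperm (π := π) i, e0, bperm_sigma_apply hinv, bperm_bperm]
    have h2 : (sigmaP n π).SameCycle i (bperm n (π i)) := ⟨-1, h1.symm⟩
    rw [sc_congr_left hbp.symm j, sc_congr_left h2.symm j]
    exact or_comm
  have key : col n π (π i) ↔ col n π (bperm n i) := by
    unfold col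
    rw [hmπ, mrep_bperm]
    exact sc_congr_right hbp.symm (mrep n π i)
  rw [key]
  exact col_bperm hinv hfpf i

end ColProps2


lemma gap_filter_le (n : ℕ) (s : Fin (2*n) → ℝ) (hmono : Monotone s)
    (G : ℝ) (hG0 : 0 ≤ G)
    (hstep : ∀ (t : ℕ) (ht : t + 1 < 2*n), s ⟨t+1, ht⟩ - s ⟨t, by omega⟩ ≤ G)
    (P : Fin (2*n) → Prop) [DecidablePred P]
    (hP : ∀ (t : ℕ) (ht : t + 2 < 2*n),
      P ⟨t, by omega⟩ ∨ P ⟨t+1, by omega⟩ ∨ P ⟨t+2, ht⟩) :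
    gap ((Finset.univ.filter P).image s) ≤ 3 * G := by
  classical
  have tele : ∀ (d : ℕ) (i j : Fin (2*n)), (j : ℕ) = (i : ℕ) + d → s j - s i ≤ d * G := by
    intro d
    induction d with
    | zero =>
      intro i j h
      have : j = i := Fin.ext (by omega)
      rw [this]
      simp
    | succ d ih =>
      intro i j h
      have hd : (i : ℕ) + d < 2*n := by
        have := j.isLt; omega
      have h1 : s j - s ⟨(i : ℕ) + d, hd⟩ ≤ G := by
        have hstep' := hstep ((i : ℕ) + d) (by have := j.isLt; omega)
        have hj : j = ⟨(i : ℕ) + d + 1, by have := j.isLt; omega⟩ := Fin.ext (by simp; omega)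
        rw [hj]
        exact hstep'
      have h2 := ih i ⟨(i : ℕ) + d, hd⟩ rfl
      push_cast
      linarith
  apply Real.sSup_le _ (by linarith)
  rintro x (hx | hx)
  · simp only [Set.mem_singleton_iff] at hx
    rw [hx]; linarith
  obtain ⟨a, ha, b, hb, hab, hbetween, rfl⟩ := hx
  set Y := (Finset.univ.filter P).image s with hY
  -- maximal index with value a
  have hFa : (Finset.univ.filter (fun k => P k ∧ s k = a)).Nonempty := by
    rw [hY, Finset.mem_image] at ha
    obtain ⟨i, hi, hsi⟩ := ha
    rw [Finset.mem_filter] at hi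
    exact ⟨i, by simp [Finset.mem_filter, hi.2, hsi]⟩
  have hFb : (Finset.univ.filter (fun k => P k ∧ s k = b)).Nonempty := by
    rw [hY, Finset.mem_image] at hb
    obtain ⟨i, hi, hsi⟩ := hb
    rw [Finset.mem_filter] at hi
    exact ⟨i, by simp [Finset.mem_filter, hi.2, hsi]⟩
  set i := (Finset.univ.filter (fun k => P k ∧ s k = a)).max' hFa with hi
  set j := (Finset.univ.filter (fun k => P k ∧ s k = b)).min' hFb with hj
  have hiprop : P i ∧ s i = a := by
    have := Finset.max'_mem _ hFa
    rw [Finset.mem_filter] at this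
    exact this.2
  have hjprop : P j ∧ s j = b := by
    have := Finset.min'_mem _ hFb
    rw [Finset.mem_filter] at this
    exact this.2
  have hij : (i : ℕ) < (j : ℕ) := by
    by_contra hc
    have : (j : ℕ) ≤ (i : ℕ) := by omega
    have := hmono (show j ≤ i from this)
    rw [hiprop.2, hjprop.2] at this
    linarith
  have hmid : ∀ (t : ℕ) (h1 : (i : ℕ) < t) (h2 : t < (j : ℕ)), ¬ P ⟨t, by have := j.isLt; omega⟩ := by
    intro t h1 h2 hPt
    have hlt : t < 2*n := by have := j.isLt; omega
    have hsy : s ⟨t, hlt⟩ ∈ Y := by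
      rw [hY, Finset.mem_image]
      exact ⟨⟨t, hlt⟩, by simp [Finset.mem_filter, hPt], rfl⟩
    have hge : a ≤ s ⟨t, hlt⟩ := by
      rw [← hiprop.2]
      exact hmono (by simp [Fin.le_def]; omega)
    have hle : s ⟨t, hlt⟩ ≤ b := by
      rw [← hjprop.2]
      exact hmono (by simp [Fin.le_def]; omega)
    have hnb := hbetween _ hsy
    rcases eq_or_lt_of_le hge with heq | hgt
    · -- s t = a, so t ≤ i, contradiction
      have : (⟨t, hlt⟩ : Fin (2*n)) ∈ Finset.univ.filter (fun k => P k ∧ s k = a) := by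
        simp [Finset.mem_filter, hPt, heq.symm]
      have := Finset.le_max' _ _ this
      simp [Fin.le_def] at this
      omega
    · rcases eq_or_lt_of_le hle with heq | hlt2
      · have : (⟨t, hlt⟩ : Fin (2*n)) ∈ Finset.univ.filter (fun k => P k ∧ s k = b) := by
          simp [Finset.mem_filter, hPt, heq]
        have := Finset.min'_le _ _ this
        simp [Fin.le_def] at this
        omega
      · exact hnb ⟨hgt, hlt2⟩
  have hjle : (j : ℕ) ≤ (i : ℕ) + 3 := by
    by_contra hc
    have h4 : (i : ℕ) + 4 ≤ (j : ℕ) := by omega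
    have ht2 : (i : ℕ) + 1 + 2 < 2*n := by have := j.isLt; omega
    rcases hP ((i : ℕ) + 1) ht2 with h | h | h
    · exact hmid ((i : ℕ) + 1) (by omega) (by omega) h
    · exact hmid ((i : ℕ) + 2) (by omega) (by omega) h
    · exact hmid ((i : ℕ) + 3) (by omega) (by omega) h
  have htel := tele ((j : ℕ) - (i : ℕ)) i j (by omega)
  rw [hiprop.2, hjprop.2] at htel
  have hcast : (((j : ℕ) - (i : ℕ) : ℕ) : ℝ) ≤ 3 := by
    have : (j : ℕ) - (i : ℕ) ≤ 3 := by omega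
    exact_mod_cast this
  nlinarith

/-- Given `2n` points `s 0 ≤ s 1 ≤ … ≤ s (2n-1)` on the line paired by a
fixed-point-free involution `π`, there exists a feasible coloring `R ∪ B` such that the
larger of the two bottleneck values (maximum gaps) is at most `3` times the largest
distance between consecutive input points. -/
theorem bottleneck_upper_bound_on_line (n : ℕ) (hn : 1 ≤ n)
    (s : Fin (2 * n) → ℝ) (hmono : Monotone s)
    (π : Equiv.Perm (Fin (2 * n)))
    (hinv : ∀ i, π (π i) = i) (hfpf : ∀ i, π i ≠ i) :
    ∃ R B : Finset (Fin (2 * n)),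
      R ∪ B = Finset.univ ∧ Disjoint R B ∧ (∀ i, i ∈ R ↔ π i ∈ B) ∧
      max (gap (R.image s)) (gap (B.image s)) ≤
        3 * sSup {c | ∃ j : Fin (2 * n), ∃ h : (j : ℕ) + 1 < 2 * n,
          c = s ⟨(j : ℕ) + 1, h⟩ - s j} := by
  classical
  set G := sSup {c | ∃ j : Fin (2 * n), ∃ h : (j : ℕ) + 1 < 2 * n,
      c = s ⟨(j : ℕ) + 1, h⟩ - s j} with hG
  have hbdd : BddAbove {c | ∃ j : Fin (2 * n), ∃ h : (j : ℕ) + 1 < 2 * n,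
      c = s ⟨(j : ℕ) + 1, h⟩ - s j} := by
    apply Set.Finite.bddAbove
    apply Set.Finite.subset (Set.finite_range
      (fun p : Fin (2 * n) × Fin (2 * n) => s p.1 - s p.2))
    rintro c ⟨j, h, rfl⟩
    exact ⟨(⟨(j : ℕ) + 1, h⟩, j), rfl⟩
  have hstep : ∀ (t : ℕ) (ht : t + 1 < 2 * n), s ⟨t + 1, ht⟩ - s ⟨t, by omega⟩ ≤ G := by
    intro t ht
    apply le_csSup hbdd
    exact ⟨⟨t, by omega⟩, ht, rfl⟩
  have hG0 : 0 ≤ G := by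
    have hs := hstep 0 (by omega)
    have hmle := hmono (show (⟨0, by omega⟩ : Fin (2 * n)) ≤ ⟨0 + 1, by omega⟩ by
      simp [Fin.le_def])
    linarith
  have hcolπ := col_pi (π := π) hinv hfpf
  have hcolb := col_bperm (π := π) hinv hfpf
  have hadj : ∀ (t : ℕ) (ht : t + 1 < 2 * n), t % 2 = 0 →
      (col n π ⟨t + 1, ht⟩ ↔ ¬ col n π ⟨t, by omega⟩) := by
    intro t ht hev
    have hb : bperm n ⟨t, by omega⟩ = ⟨t + 1, ht⟩ := by
      apply Fin.ext
      simp [bperm_apply, bud, budf_even hev]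
    rw [← hb]
    exact hcolb _
  refine ⟨Finset.univ.filter (col n π), Finset.univ.filter (fun i => ¬ col n π i),
    ?_, ?_, ?_, ?_⟩
  · exact Finset.filter_union_filter_not_eq _ _
  · exact Finset.disjoint_filter_filter_not _ _ _
  · intro i
    simp only [Finset.mem_filter, Finset.mem_univ, true_and]
    rw [hcolπ i]
    tauto
  · apply max_le
    · apply gap_filter_le n s hmono G hG0 hstep
      intro t ht
      by_contra hc
      push_neg at hc
      obtain ⟨h0, h1, h2⟩ := hc
      by_cases hev : t % 2 = 0
      · exact h0 (not_not.mp (fun hh => h1 ((hadj t (by omega) hev).mpr hh)))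
      · have hev1 : (t + 1) % 2 = 0 := by omega
        exact h1 (not_not.mp (fun hh => h2 ((hadj (t + 1) (by omega) hev1).mpr hh)))
    · apply gap_filter_le n s hmono G hG0 hstep
      intro t ht
      by_contra hc
      push_neg at hc
      obtain ⟨h0, h1, h2⟩ := hc
      by_cases hev : t % 2 = 0
      · exact (hadj t (by omega) hev).mp h1 h0
      · have hev1 : (t + 1) % 2 = 0 := by omega
        exact (hadj (t + 1) (by omega) hev1).mp h2 h1
end

section
/- Let S be a finite set of at least two points in a metric space, let T be a minimum spanning tree of S, and let h be a maximum-weight edge of T. Then for every partition of S into two nonempty sets R and B, one has mstCost(R) + mstCost(B) ≥ mstCost(S) − w(h), where w(h) is the length of the edge h. -/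
variable {α : Type*} [MetricSpace α] [DecidableEq α]

/-- Two points are connected via the edge set `E` (edges usable in both directions). -/
def EdgeConn (E : Finset (α × α)) (x y : α) : Prop :=
  Relation.ReflTransGen (fun a b => (a, b) ∈ E ∨ (b, a) ∈ E) x y

/-- `E` is (the edge set of) a spanning tree of the complete graph on the finite
point set `X`: its edges join points of `X`, it has `|X| - 1` edges, and it
connects every two points of `X`. -/
def IsSpanningTreeOn (X : Finset α) (E : Finset (α × α)) : Prop :=
  (∀ e ∈ E, e.1 ∈ X ∧ e.2 ∈ X) ∧ E.card + 1 = X.card ∧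
    ∀ x ∈ X, ∀ y ∈ X, EdgeConn E x y

/-- The minimum total edge length of a spanning tree on `X`. -/
noncomputable def mstCost (X : Finset α) : ℝ :=
  sInf {c | ∃ E : Finset (α × α), IsSpanningTreeOn X E ∧ c = ∑ e ∈ E, dist e.1 e.2}

/-!
Proof idea: take spanning trees of `R` and `B` and join them by an edge of `T` that crosses
the partition; such an edge exists because `T` connects `R` to `B`, and its length is at most
`dist h.1 h.2`. The result is a spanning tree of `S`, so
`mstCost S ≤ mstCost R + mstCost B + dist h.1 h.2`.
-/

open Finset

namespace EdgeConn

variable {V : Type*} {E E' : Finset (V × V)} {x y : V}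

theorem edge {a b : V} (h : (a, b) ∈ E ∨ (b, a) ∈ E) : EdgeConn E a b :=
  Relation.ReflTransGen.single h

theorem trans {z : V} (hxy : EdgeConn E x y) (hyz : EdgeConn E y z) : EdgeConn E x z :=
  Relation.ReflTransGen.trans hxy hyz

theorem symm (h : EdgeConn E x y) : EdgeConn E y x :=
  Relation.reflTransGen_swap.mp (Relation.ReflTransGen.mono (fun _ _ hab => Or.symm hab) _ _ h)

theorem mono (hE : E ⊆ E') (h : EdgeConn E x y) : EdgeConn E' x y :=
  Relation.ReflTransGen.mono (fun _ _ hab => Or.imp (@hE _) (@hE _) hab) _ _ h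

theorem exists_adj_mem_notMem {R : Finset V} (h : EdgeConn E x y) (hx : x ∈ R) (hy : y ∉ R) :
    ∃ a ∈ R, ∃ b ∉ R, (a, b) ∈ E ∨ (b, a) ∈ E := by
  induction h with
  | refl => exact absurd hx hy
  | @tail b c _ hbc ih =>
    by_cases hb : b ∈ R
    · exact ⟨b, hb, c, hy, hbc⟩
    · exact ih hb

end EdgeConn

theorem exists_isSpanningTreeOn {V : Type*} [DecidableEq V] {X : Finset V} (hX : X.Nonempty) :
    ∃ E : Finset (V × V), IsSpanningTreeOn X E := by
  obtain ⟨r, hr⟩ := hX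
  refine ⟨(X.erase r).image (r, ·), ?_, ?_, ?_⟩
  · simp only [mem_image, mem_erase]
    rintro _ ⟨x, ⟨-, hx⟩, rfl⟩
    exact ⟨hr, hx⟩
  · rw [card_image_of_injective _ (Prod.mk_right_injective r), card_erase_add_one hr]
  · have hroot : ∀ x ∈ X, EdgeConn ((X.erase r).image (r, ·)) x r := by
      intro x hx
      by_cases hxr : x = r
      · exact hxr ▸ Relation.ReflTransGen.refl
      · exact EdgeConn.edge (Or.inr (mem_image_of_mem _ (mem_erase.mpr ⟨hxr, hx⟩)))
    exact fun x hx y hy => (hroot x hx).trans (hroot y hy).symm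

theorem le_mstCost {X : Finset α} (hX : X.Nonempty) {c : ℝ}
    (h : ∀ E, IsSpanningTreeOn X E → c ≤ ∑ e ∈ E, dist e.1 e.2) : c ≤ mstCost X := by
  obtain ⟨E, hE⟩ := exists_isSpanningTreeOn hX
  exact le_csInf ⟨_, E, hE, rfl⟩ (by rintro _ ⟨E', hE', rfl⟩; exact h E' hE')

namespace IsSpanningTreeOn

theorem mstCost_le {M : Type*} [MetricSpace M] {X : Finset M} {E : Finset (M × M)}
    (hE : IsSpanningTreeOn X E) : mstCost X ≤ ∑ e ∈ E, dist e.1 e.2 :=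
  csInf_le ⟨0, by rintro _ ⟨E', -, rfl⟩; exact sum_nonneg fun _ _ => dist_nonneg⟩ ⟨E, hE, rfl⟩

variable {V : Type*} {R B : Finset V} {ER EB : Finset (V × V)} {a b : V}

theorem disjoint_of_disjoint (hER : IsSpanningTreeOn R ER) (hEB : IsSpanningTreeOn B EB)
    (hdisj : Disjoint R B) : Disjoint ER EB :=
  disjoint_left.mpr fun _ heR heB => disjoint_left.mp hdisj (hER.1 _ heR).1 (hEB.1 _ heB).1

theorem mk_notMem_union [DecidableEq V] (hER : IsSpanningTreeOn R ER)
    (hEB : IsSpanningTreeOn B EB) (hdisj : Disjoint R B) (ha : a ∈ R) (hb : b ∈ B) :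
    (a, b) ∉ ER ∪ EB := by
  rw [mem_union, not_or]
  exact ⟨fun h => disjoint_left.mp hdisj (hER.1 _ h).2 hb,
    fun h => disjoint_left.mp hdisj ha (hEB.1 _ h).1⟩

theorem insert_union [DecidableEq V] (hER : IsSpanningTreeOn R ER)
    (hEB : IsSpanningTreeOn B EB) (hdisj : Disjoint R B) (ha : a ∈ R) (hb : b ∈ B) :
    IsSpanningTreeOn (R ∪ B) (insert (a, b) (ER ∪ EB)) := by
  set E := insert (a, b) (ER ∪ EB)
  have hERE : ER ⊆ E := subset_union_left.trans (subset_insert _ _)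
  have hEBE : EB ⊆ E := subset_union_right.trans (subset_insert _ _)
  refine ⟨?_, ?_, ?_⟩
  · simp only [E, mem_insert, mem_union]
    rintro e (rfl | he | he)
    · exact ⟨Or.inl ha, Or.inr hb⟩
    · exact (hER.1 e he).imp Or.inl Or.inl
    · exact (hEB.1 e he).imp Or.inr Or.inr
  · rw [card_insert_of_notMem (hER.mk_notMem_union hEB hdisj ha hb),
      card_union_of_disjoint (hER.disjoint_of_disjoint hEB hdisj),
      card_union_of_disjoint hdisj, ← hER.2.1, ← hEB.2.1]
    ring
  · have hroot : ∀ x ∈ R ∪ B, EdgeConn E x a := by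
      intro x hx
      rcases mem_union.mp hx with hxR | hxB
      · exact (hER.2.2 x hxR a ha).mono hERE
      · exact ((hEB.2.2 x hxB b hb).mono hEBE).trans
          (EdgeConn.edge (Or.inr (mem_insert_self _ _)))
    exact fun x hx y hy => (hroot x hx).trans (hroot y hy).symm

theorem sum_dist_insert_union [MetricSpace V] [DecidableEq V] (hER : IsSpanningTreeOn R ER)
    (hEB : IsSpanningTreeOn B EB) (hdisj : Disjoint R B) (ha : a ∈ R) (hb : b ∈ B) :
    ∑ e ∈ insert (a, b) (ER ∪ EB), dist e.1 e.2 =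
      dist a b + ((∑ e ∈ ER, dist e.1 e.2) + ∑ e ∈ EB, dist e.1 e.2) := by
  rw [sum_insert (hER.mk_notMem_union hEB hdisj ha hb),
    sum_union (hER.disjoint_of_disjoint hEB hdisj)]

end IsSpanningTreeOn

theorem mstCost_union_le {R B : Finset α} (hdisj : Disjoint R B) {a b : α}
    (ha : a ∈ R) (hb : b ∈ B) : mstCost (R ∪ B) ≤ mstCost R + mstCost B + dist a b := by
  have hR : ∀ EB, IsSpanningTreeOn B EB →
      mstCost (R ∪ B) - dist a b - ∑ e ∈ EB, dist e.1 e.2 ≤ mstCost R :=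
    fun EB hEB => le_mstCost ⟨a, ha⟩ fun ER hER => by
      have := (hER.insert_union hEB hdisj ha hb).mstCost_le
      rw [hER.sum_dist_insert_union hEB hdisj ha hb] at this
      linarith
  have hB : mstCost (R ∪ B) - dist a b - mstCost R ≤ mstCost B :=
    le_mstCost ⟨b, hb⟩ fun EB hEB => by linarith [hR EB hEB]
  linarith

theorem mst_partition_lower_bound_general
    (S : Finset α)
    (T : Finset (α × α)) (hT : IsSpanningTreeOn S T)
    (h : α × α) (hmax : ∀ e ∈ T, dist e.1 e.2 ≤ dist h.1 h.2)
    (R B : Finset α) (hRB : R ∪ B = S) (hdisj : Disjoint R B)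
    (hRne : R.Nonempty) (hBne : B.Nonempty) :
    mstCost S - dist h.1 h.2 ≤ mstCost R + mstCost B := by
  obtain ⟨r, hr⟩ := hRne
  obtain ⟨b₀, hb₀⟩ := hBne
  have hconn : EdgeConn T r b₀ :=
    hT.2.2 r (hRB ▸ mem_union_left B hr) b₀ (hRB ▸ mem_union_right R hb₀)
  obtain ⟨a, ha, b, hbR, hab⟩ :=
    hconn.exists_adj_mem_notMem hr (disjoint_right.mp hdisj hb₀)
  have hbB : b ∈ B := by
    have hbS : b ∈ R ∪ B := hRB ▸ hab.elim (fun e => (hT.1 _ e).2) fun e => (hT.1 _ e).1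
    exact (mem_union.mp hbS).resolve_left hbR
  have hdist : dist a b ≤ dist h.1 h.2 :=
    hab.elim (hmax _) fun e => dist_comm a b ▸ hmax _ e
  linarith [hRB ▸ mstCost_union_le hdisj ha hbB]

/-- If `T` is a minimum spanning tree of `S` and `h` is a maximum-weight
edge of `T`, then for every partition of `S` into two nonempty sets `R` and `B`,
`mstCost R + mstCost B ≥ mstCost S - dist h.1 h.2`. -/
theorem mst_partition_lower_bound
    (S : Finset α) (hS : 2 ≤ S.card)
    (T : Finset (α × α)) (hT : IsSpanningTreeOn S T)
    (hTmin : (∑ e ∈ T, dist e.1 e.2) = mstCost S)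
    (h : α × α) (hh : h ∈ T) (hmax : ∀ e ∈ T, dist e.1 e.2 ≤ dist h.1 h.2)
    (R B : Finset α) (hRB : R ∪ B = S) (hdisj : Disjoint R B)
    (hRne : R.Nonempty) (hBne : B.Nonempty) :
    mstCost S - dist h.1 h.2 ≤ mstCost R + mstCost B :=
  mst_partition_lower_bound_general S T hT h hmax R B hRB hdisj hRne hBne
end
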